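/- arXiv:1001.2927 — 4 statements merged into one kernel-verified Lean document; each statement's English description precedes it below -/
import Mathlib

section
/- The derived (commutator) subgroup of the group Sol is exactly the subgroup K = ℝ² × {0}, i.e. it equals the kernel of the projection homomorphism ((x,y),z) ↦ z from Sol onto ℝ. -/
/-!
Since the quotient `Sol / ker rightHom ≅ ℝ` is abelian, the derived subgroup lies in the kernel.
Conversely, in any semidirect product `⁅inr g, inl n⁆ = inl (φ g n * n⁻¹)`, and for `Sol` with
`λ = 1` the map `p ↦ λ • p - p` is `(x, y) ↦ ((e - 1) x, (e⁻¹ - 1) y)`, which is onto `ℝ²`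
because `e ≠ 1`; so every element of the kernel `ℝ² × {0}` is a commutator.
-/

/-- The action of `λ ∈ ℝ` on `ℝ²` by `(x, y) ↦ (e^λ x, e^{-λ} y)`, as an
additive group automorphism. -/
noncomputable def solAct (l : ℝ) : (ℝ × ℝ) ≃+ (ℝ × ℝ) where
  toFun p := (Real.exp l * p.1, Real.exp (-l) * p.2)
  invFun p := (Real.exp (-l) * p.1, Real.exp l * p.2)
  left_inv p := by
    refine Prod.ext ?_ ?_ <;> simp [← mul_assoc, ← Real.exp_add]
  right_inv p := by
    refine Prod.ext ?_ ?_ <;> simp [← mul_assoc, ← Real.exp_add]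
  map_add' p q := by
    simp [Prod.ext_iff]
    constructor <;> ring

/-- The homomorphism `Multiplicative ℝ →* MulAut (Multiplicative (ℝ × ℝ))`
defining the group `Sol` as a semidirect product. -/
noncomputable def solPhi : Multiplicative ℝ →* MulAut (Multiplicative (ℝ × ℝ)) where
  toFun l := AddEquiv.toMultiplicative (solAct l.toAdd)
  map_one' := by
    ext p <;>
    simp [solAct, AddEquiv.toMultiplicative]
  map_mul' a b := by
    ext p <;>
    simp [solAct, AddEquiv.toMultiplicative, MulAut.mul_def, MulEquiv.trans_apply,
      Real.exp_add, Prod.ext_iff, toAdd_mul, neg_add] <;>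
    ring

/-- The group `Sol = ℝ² ⋊ ℝ`. -/
noncomputable abbrev Sol : Type := SemidirectProduct (Multiplicative (ℝ × ℝ)) (Multiplicative ℝ) solPhi

/-- The element `e₃ = ((0,0), 1)` of `Sol`. -/
noncomputable def e₃ : Sol := SemidirectProduct.inr (Multiplicative.ofAdd (1 : ℝ))

open scoped commutatorElement

namespace SemidirectProduct

variable {N G : Type*} [Group N]

theorem commutatorElement_inr_inl [Group G] {φ : G →* MulAut N} (g : G) (n : N) :
    ⁅(inr g : N ⋊[φ] G), (inl n : N ⋊[φ] G)⁆ = inl (φ g n * n⁻¹) := by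
  rw [commutatorElement_def, map_mul, inl_aut, map_inv, map_inv]

theorem ker_rightHom_le_commutator [Group G] {φ : G →* MulAut N} (g : G)
    (hg : Function.Surjective fun n => φ g n * n⁻¹) :
    (rightHom : N ⋊[φ] G →* G).ker ≤ commutator (N ⋊[φ] G) := by
  rintro _ hx
  obtain ⟨m, rfl⟩ := range_inl_eq_ker_rightHom.ge hx
  obtain ⟨n, rfl⟩ := hg m
  rw [← commutatorElement_inr_inl]
  exact Subgroup.commutator_mem_commutator (Subgroup.mem_top _) (Subgroup.mem_top _)

theorem commutator_eq_ker_rightHom [CommGroup G] {φ : G →* MulAut N} (g : G)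
    (hg : Function.Surjective fun n => φ g n * n⁻¹) :
    commutator (N ⋊[φ] G) = (rightHom : N ⋊[φ] G →* G).ker :=
  le_antisymm (Abelianization.commutator_subset_ker _) (ker_rightHom_le_commutator g hg)

end SemidirectProduct

theorem solAct_sub_self_surjective {l : ℝ} (hl : l ≠ 0) :
    Function.Surjective fun p => solAct l p - p := by
  have h₁ : Real.exp l - 1 ≠ 0 := sub_ne_zero.2 (mt (Real.exp_eq_one_iff _).1 hl)
  have h₂ : Real.exp (-l) - 1 ≠ 0 :=
    sub_ne_zero.2 (mt (Real.exp_eq_one_iff _).1 (neg_ne_zero.2 hl))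
  rintro ⟨a, b⟩
  refine ⟨(a / (Real.exp l - 1), b / (Real.exp (-l) - 1)), Prod.ext ?_ ?_⟩
  · change Real.exp l * _ - _ = a
    field_simp
  · change Real.exp (-l) * _ - _ = b
    field_simp

/-- The derived subgroup of `Sol` is exactly `K = ℝ² × {0}`, the kernel of the
projection `((x,y),z) ↦ z` onto `ℝ`. -/
theorem sol_commutator_eq_ker_rightHom :
    commutator Sol = (SemidirectProduct.rightHom : Sol →* Multiplicative ℝ).ker :=
  SemidirectProduct.commutator_eq_ker_rightHom (Multiplicative.ofAdd 1) fun m =>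
    let ⟨p, hp⟩ := solAct_sub_self_surjective one_ne_zero m.toAdd
    ⟨Multiplicative.ofAdd p, hp⟩
end

section
/- Let A be a group automorphism of ℤ² and let G = ℤ² ⋊_A ℤ be the associated semidirect product. Then the derived (commutator) subgroup of G equals the image, under the canonical inclusion ℤ² → G, of the subgroup (A − I)(ℤ²) = { A v − v : v ∈ ℤ² } of ℤ². -/
/-- The homomorphism `Multiplicative ℤ →* MulAut (Multiplicative (ℤ × ℤ))`
sending `n` to `Aⁿ`, for an automorphism `A` of `ℤ²`. -/
def torusPhi (A : (ℤ × ℤ) ≃+ (ℤ × ℤ)) :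
    Multiplicative ℤ →* MulAut (Multiplicative (ℤ × ℤ)) :=
  zpowersHom (MulAut (Multiplicative (ℤ × ℤ))) (AddEquiv.toMultiplicative A)

/-- The semidirect product `G = ℤ² ⋊_A ℤ`, fundamental group of the suspension
of the torus diffeomorphism defined by `A`. -/
abbrev TorusSusp (A : (ℤ × ℤ) ≃+ (ℤ × ℤ)) : Type :=
  SemidirectProduct (Multiplicative (ℤ × ℤ)) (Multiplicative ℤ) (torusPhi A)

/-- The subgroup `(A - I)(ℤ²)` of `ℤ²`, the range of `v ↦ A v - v`. -/
def rangeAminusI (A : (ℤ × ℤ) ≃+ (ℤ × ℤ)) : AddSubgroup (ℤ × ℤ) :=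
  (A.toAddMonoidHom - AddMonoidHom.id (ℤ × ℤ)).range

/-!
For a semidirect product `N ⋊ G` with `N` and `G` abelian, every commutator lies in `N`,
and its `N`-component is a product of two elements of the form `g • n / n`. Conversely
`g • n / n` is itself the commutator `⁅g, n⁆`. For `G = ℤ` acting through `A`, the elements
`Aᵏ n / n` telescope into products of elements `A m / m` and their inverses, so the subgroup
they generate is just the range of `A - I`.
-/

open SemidirectProduct
open scoped commutatorElement

theorem MulAut.zpow_apply_div_mem {N : Type*} [CommGroup N] {σ : MulAut N} {H : Subgroup N}
    (hH : ∀ n, σ n / n ∈ H) (k : ℤ) (n : N) : (σ ^ k) n / n ∈ H := by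
  induction k using Int.induction_on generalizing n with
  | zero => simp
  | succ k ih =>
    have telescope : (σ ^ ((k : ℤ) + 1)) n / n = (σ ^ (k : ℤ)) (σ n) / σ n * (σ n / n) := by
      rw [zpow_add_one, MulAut.mul_apply, div_mul_div_cancel]
    exact telescope ▸ mul_mem (ih _) (hH n)
  | pred k ih =>
    have telescope : (σ ^ (-(k : ℤ) - 1)) n / n
        = (σ ^ (-(k : ℤ))) (σ⁻¹ n) / σ⁻¹ n * (σ (σ⁻¹ n) / σ⁻¹ n)⁻¹ := by
      rw [zpow_sub_one, MulAut.mul_apply, MulAut.apply_inv_self, inv_div, div_mul_div_cancel]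
    exact telescope ▸ mul_mem (ih _) (inv_mem (hH _))

namespace SemidirectProduct

variable {N G : Type*}

theorem inl_div_eq_commutatorElement [Group N] [Group G] (φ : G →* MulAut N) (g : G) (n : N) :
    (inl (φ g n / n) : N ⋊[φ] G) = ⁅(inr g : N ⋊[φ] G), inl n⁆ := by
  rw [commutatorElement_def, div_eq_mul_inv, map_mul, inl_aut, map_inv, map_inv]

theorem inl_div_mem_commutator [Group N] [Group G] (φ : G →* MulAut N) (g : G) (n : N) :
    (inl (φ g n / n) : N ⋊[φ] G) ∈ commutator (N ⋊[φ] G) :=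
  inl_div_eq_commutatorElement φ g n ▸
    Subgroup.commutator_mem_commutator (Subgroup.mem_top _) (Subgroup.mem_top _)

theorem commutatorElement_left [CommGroup N] [CommGroup G] (φ : G →* MulAut N)
    (x y : N ⋊[φ] G) :
    ⁅x, y⁆.left = φ x.right y.left / y.left * (φ y.right x.left⁻¹ / x.left⁻¹) := by
  simp only [commutatorElement_def, mul_left, inv_left, mul_right, inv_right,
    ← MulAut.mul_apply, ← map_mul, mul_inv_cancel_comm, mul_inv_cancel, map_one,
    MulAut.one_apply, div_eq_mul_inv, inv_inv]
  simp only [mul_comm, mul_left_comm]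

theorem commutatorElement_right [Group N] [CommGroup G] (φ : G →* MulAut N)
    (x y : N ⋊[φ] G) : ⁅x, y⁆.right = 1 := by
  simp [commutatorElement_def, mul_right, inv_right, mul_comm x.right]

theorem commutator_le_map_inl [CommGroup N] [CommGroup G] {φ : G →* MulAut N} {H : Subgroup N}
    (hH : ∀ g n, φ g n / n ∈ H) : commutator (N ⋊[φ] G) ≤ H.map inl := by
  rw [commutator_def, Subgroup.commutator_le]
  intro x _ y _
  refine ⟨⁅x, y⁆.left, ?_, ?_⟩
  · rw [commutatorElement_left]
    exact mul_mem (hH _ _) (hH _ _)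
  · ext
    · rfl
    · exact (commutatorElement_right φ x y).symm

end SemidirectProduct

theorem torusPhi_apply (A : (ℤ × ℤ) ≃+ (ℤ × ℤ)) (m : Multiplicative ℤ) :
    torusPhi A m = AddEquiv.toMultiplicative A ^ m.toAdd := rfl

theorem mem_toSubgroup_rangeAminusI_iff (A : (ℤ × ℤ) ≃+ (ℤ × ℤ)) (x : Multiplicative (ℤ × ℤ)) :
    x ∈ AddSubgroup.toSubgroup (rangeAminusI A) ↔
      ∃ n, x = AddEquiv.toMultiplicative A n / n := by
  constructor
  · rintro ⟨v, hv⟩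
    exact ⟨Multiplicative.ofAdd v, hv.symm⟩
  · rintro ⟨n, rfl⟩
    exact ⟨n.toAdd, rfl⟩

/-- The derived subgroup of `G = ℤ² ⋊_A ℤ` equals the image under the canonical
inclusion `ℤ² → G` of the subgroup `(A - I)(ℤ²)` of `ℤ²`. -/
theorem commutator_torusSusp (A : (ℤ × ℤ) ≃+ (ℤ × ℤ)) :
    commutator (TorusSusp A) =
      Subgroup.map (SemidirectProduct.inl : Multiplicative (ℤ × ℤ) →* TorusSusp A)
        (AddSubgroup.toSubgroup (rangeAminusI A)) := by
  have hσ : ∀ n, AddEquiv.toMultiplicative A n / n ∈ AddSubgroup.toSubgroup (rangeAminusI A) :=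
    fun n => (mem_toSubgroup_rangeAminusI_iff A _).2 ⟨n, rfl⟩
  refine le_antisymm (commutator_le_map_inl fun m n => ?_) ?_
  · rw [torusPhi_apply]
    exact MulAut.zpow_apply_div_mem hσ m.toAdd n
  · rintro _ ⟨x, hx, rfl⟩
    obtain ⟨n, rfl⟩ := (mem_toSubgroup_rangeAminusI_iff A x).1 hx
    have hgen : torusPhi A (.ofAdd 1) = AddEquiv.toMultiplicative A := by
      rw [torusPhi_apply, toAdd_ofAdd, zpow_one]
    exact hgen ▸ inl_div_mem_commutator (torusPhi A) (.ofAdd 1) n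
end

section
/- For every real number k with 0 ≤ k < 1, the following inequality holds: (8 / (√2 · √(1 + k²))) · ( E(k) − (K(k)/2)·(1 − k²) ) ≥ 4 − π, where E(k) and K(k) are the complete elliptic integrals of the second and first kind. (This is the length estimate 8LK√|ab| ≥ 4 − π for the type A geodesics homotopic to closed geodesics of type C on a Sol manifold.) -/
/-!
Write `u θ = 1 - k² sin² θ`. Since `1 - k² ≤ u θ`, the integrand of `E(k) - (1 - k²) K(k) / 2`,
namely `√(u θ) - (1 - k²) / (2 √(u θ))`, is at least `√(u θ) / 2`, and since `cos² θ ≤ u θ` this is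
at least `cos θ / 2`, whose integral over `[0, π/2]` is `1/2`. The prefactor is at least `4`
because `1 + k² ≤ 2`, so the left-hand side is at least `2 ≥ 4 - π`.
-/

open Real intervalIntegral

/-- The complete elliptic integral of the second kind. -/
noncomputable def ellipticE (k : ℝ) : ℝ :=
  ∫ θ in (0 : ℝ)..(π / 2), Real.sqrt (1 - k ^ 2 * Real.sin θ ^ 2)

/-- The complete elliptic integral of the first kind. -/
noncomputable def ellipticK (k : ℝ) : ℝ :=
  ∫ θ in (0 : ℝ)..(π / 2), (1 - k ^ 2 * Real.sin θ ^ 2) ^ (-(1 / 2) : ℝ)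

lemma div_two_le_sqrt_sub_mul_rpow_neg_half {u c m : ℝ} (hu : 0 < u) (hc : c ≤ √u)
    (hm : m ≤ u) : c / 2 ≤ √u - m / 2 * u ^ (-(1 / 2) : ℝ) := by
  rw [rpow_neg hu.le, ← sqrt_eq_rpow]
  have : m / 2 * (√u)⁻¹ ≤ √u / 2 :=
    calc m / 2 * (√u)⁻¹ ≤ u / 2 * (√u)⁻¹ := by gcongr
      _ = √u / 2 := by
        field_simp
        rw [sq_sqrt hu.le]
  linarith

lemma four_le_eight_div_sqrt_two_mul_sqrt_one_add_sq {k : ℝ} (hk : k ^ 2 ≤ 1) :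
    4 ≤ 8 / (√2 * √(1 + k ^ 2)) := by
  have hprod : √2 * √(1 + k ^ 2) ≤ 2 := by
    rw [← sqrt_mul zero_le_two, sqrt_le_left]
    · nlinarith
    · norm_num
  rw [le_div_iff₀ (by positivity)]
  linarith

section Elliptic

variable {k : ℝ}

lemma one_sub_sq_mul_sin_sq_pos (hk : k ^ 2 < 1) (θ : ℝ) : 0 < 1 - k ^ 2 * sin θ ^ 2 := by
  nlinarith [sin_sq_le_one θ, mul_le_mul_of_nonneg_left (sin_sq_le_one θ) (sq_nonneg k)]

lemma continuous_one_sub_sq_mul_sin_sq_rpow_neg_half (hk : k ^ 2 < 1) :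
    Continuous fun θ : ℝ => (1 - k ^ 2 * sin θ ^ 2) ^ (-(1 / 2) : ℝ) :=
  (by fun_prop : Continuous fun θ : ℝ => 1 - k ^ 2 * sin θ ^ 2).rpow_const
    fun θ => .inl (one_sub_sq_mul_sin_sq_pos hk θ).ne'

lemma ellipticE_sub_ellipticK_eq_integral (hk : k ^ 2 < 1) :
    ellipticE k - ellipticK k / 2 * (1 - k ^ 2) =
      ∫ θ in (0 : ℝ)..(π / 2), (√(1 - k ^ 2 * sin θ ^ 2)
        - (1 - k ^ 2) / 2 * (1 - k ^ 2 * sin θ ^ 2) ^ (-(1 / 2) : ℝ)) := by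
  have hK := continuous_one_sub_sq_mul_sin_sq_rpow_neg_half hk
  rw [integral_sub ((by fun_prop : Continuous _).intervalIntegrable _ _)
    ((hK.intervalIntegrable _ _).const_mul _), integral_const_mul, ellipticE, ellipticK]
  ring

lemma one_half_le_ellipticE_sub_ellipticK (hk : k ^ 2 < 1) :
    1 / 2 ≤ ellipticE k - ellipticK k / 2 * (1 - k ^ 2) := by
  have hK := continuous_one_sub_sq_mul_sin_sq_rpow_neg_half hk
  rw [ellipticE_sub_ellipticK_eq_integral hk]
  calc (1 : ℝ) / 2 = ∫ θ in (0 : ℝ)..(π / 2), cos θ / 2 := by simp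
    _ ≤ _ := by
      refine integral_mono (by positivity) ((by fun_prop : Continuous _).intervalIntegrable _ _)
        ((by fun_prop : Continuous _).intervalIntegrable _ _) fun θ => ?_
      refine div_two_le_sqrt_sub_mul_rpow_neg_half (one_sub_sq_mul_sin_sq_pos hk θ)
        ((le_abs_self _).trans (abs_le_sqrt ?_)) ?_
      · nlinarith [sin_sq_add_cos_sq θ, sin_sq_le_one θ]
      · nlinarith [sin_sq_le_one θ]

end Elliptic

/-- The length estimate `8LK√|ab| ≥ 4 - π` for type A geodesics homotopic to
closed geodesics of type C: for `0 ≤ k < 1`,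
`(8 / (√2 √(1 + k²))) (E(k) - (K(k)/2)(1 - k²)) ≥ 4 - π`. -/
theorem type_A_length_estimate (k : ℝ) (hk0 : 0 ≤ k) (hk1 : k < 1) :
    8 / (Real.sqrt 2 * Real.sqrt (1 + k ^ 2)) *
        (ellipticE k - ellipticK k / 2 * (1 - k ^ 2)) ≥ 4 - π := by
  have hk : k ^ 2 < 1 := by nlinarith
  calc 4 - π ≤ 4 * (1 / 2) := by linarith [pi_gt_three]
    _ ≤ _ := mul_le_mul (four_le_eight_div_sqrt_two_mul_sqrt_one_add_sq hk.le)
      (one_half_le_ellipticE_sub_ellipticK hk) (by norm_num) (by positivity)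
end

section
/- Let G be the fundamental group of the Klein bottle, presented with two generators a, b and the single relation a·b·a⁻¹·b = 1. Then the derived (commutator) subgroup of G equals the cyclic subgroup generated by b², i.e. commutator G = Subgroup.closure {b²}. -/
/-- The relator `a b a⁻¹ b` of the Klein bottle group, where `a` and `b` are
the two free generators. -/
def kleinRels : Set (FreeGroup (Fin 2)) :=
  {FreeGroup.of 0 * FreeGroup.of 1 * (FreeGroup.of 0)⁻¹ * FreeGroup.of 1}

/-- The fundamental group `⟨a, b ∣ a b a⁻¹ b⟩` of the Klein bottle. -/
abbrev KleinGroup : Type := PresentedGroup kleinRels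

/-!
Conjugation by `a` inverts `b`, so it inverts `b²`, while `b` centralizes `b²`; hence the cyclic
group `⟨b²⟩` is normal. Modulo `⟨b²⟩` the generators commute, because `⁅b, a⁆ = b · a b⁻¹ a⁻¹ = b²`,
so the quotient is abelian and `⟨b²⟩` contains the derived subgroup. Conversely `b² = ⁅b, a⁆` is a
commutator.
-/

open scoped commutatorElement

namespace Subgroup

variable {G : Type*} [Group G]

theorem mem_normalizer_zpowers_of_conj_eq_or_eq_inv {g x : G}
    (h : g * x * g⁻¹ = x ∨ g * x * g⁻¹ = x⁻¹) : g ∈ normalizer (zpowers x : Set G) := by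
  rw [mem_normalizer_iff_map_conj_eq, MonoidHom.map_zpowers]
  change zpowers (g * x * g⁻¹) = zpowers x
  rcases h with h | h <;> rw [h]
  exact zpowers_inv

theorem normal_of_subset_normalizer {S : Set G} (hS : closure S = ⊤) {H : Subgroup G}
    (h : S ⊆ normalizer (H : Set G)) : H.Normal :=
  normalizer_eq_top_iff.mp (top_le_iff.mp (hS ▸ (closure_le _).mpr h))

theorem commutator_le_of_closure_eq_top {S : Set G} (hS : closure S = ⊤)
    {N : Subgroup G} [N.Normal] (h : ∀ x ∈ S, ∀ y ∈ S, ⁅x, y⁆ ∈ N) : _root_.commutator G ≤ N := by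
  set T := QuotientGroup.mk' N '' S
  have hT : closure T = ⊤ := by
    rw [← MonoidHom.map_closure, hS, ← MonoidHom.range_eq_map, MonoidHom.range_eq_top]
    exact QuotientGroup.mk'_surjective N
  have hcomm : ∀ u ∈ T, ∀ v ∈ T, u * v = v * u := by
    rintro _ ⟨x, hx, rfl⟩ _ ⟨y, hy, rfl⟩
    rw [← commutatorElement_eq_one_iff_mul_comm, ← map_commutatorElement, QuotientGroup.mk'_apply,
      QuotientGroup.eq_one_iff]
    exact h x hx y hy
  rw [← Normal.quotient_commutative_iff_commutator_le, ← center_eq_top_iff, eq_top_iff, ← hT,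
    closure_le, center_eq_iInf hT]
  intro u hu
  simpa only [SetLike.mem_coe, mem_iInf, mem_centralizer_singleton_iff] using hcomm u hu

end Subgroup

namespace KleinGroup

local notation "a" => PresentedGroup.of (rels := kleinRels) (0 : Fin 2)
local notation "b" => PresentedGroup.of (rels := kleinRels) (1 : Fin 2)

theorem conj_a_b : a * b * a⁻¹ = b⁻¹ :=
  mul_eq_one_iff_eq_inv.mp <| (QuotientGroup.eq_one_iff _).mpr <|
    Subgroup.subset_normalClosure rfl

theorem commutatorElement_b_a : ⁅b, a⁆ = b ^ 2 := by
  calc ⁅b, a⁆ = b * (a * b * a⁻¹)⁻¹ := by group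
    _ = b ^ 2 := by rw [conj_a_b, inv_inv, pow_two]

theorem conj_a_b_sq : a * b ^ 2 * a⁻¹ = (b ^ 2)⁻¹ := by
  rw [← conj_pow, conj_a_b, inv_pow]

theorem zpowers_b_sq_normal : (Subgroup.zpowers (b ^ 2)).Normal := by
  refine Subgroup.normal_of_subset_normalizer (PresentedGroup.closure_range_of _) ?_
  rintro _ ⟨i, rfl⟩
  apply Subgroup.mem_normalizer_zpowers_of_conj_eq_or_eq_inv
  fin_cases i
  · exact .inr conj_a_b_sq
  · exact .inl (mul_inv_eq_of_eq_mul (pow_mul_comm' b 2).symm)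

theorem commutatorElement_of_of_mem_zpowers (i j : Fin 2) :
    ⁅PresentedGroup.of (rels := kleinRels) i, PresentedGroup.of j⁆ ∈ Subgroup.zpowers (b ^ 2) := by
  fin_cases i <;> fin_cases j
  · exact commutatorElement_self a ▸ one_mem _
  · exact commutatorElement_inv b a ▸ commutatorElement_b_a ▸ inv_mem (Subgroup.mem_zpowers _)
  · exact commutatorElement_b_a ▸ Subgroup.mem_zpowers _
  · exact commutatorElement_self b ▸ one_mem _

end KleinGroup

/-- The derived subgroup of the Klein bottle group `⟨a, b ∣ a b a⁻¹ b⟩` is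
the cyclic subgroup generated by `b²`. -/
theorem klein_commutator_eq_closure_b_sq :
    commutator KleinGroup =
      Subgroup.closure {(PresentedGroup.of (rels := kleinRels) 1) ^ 2} := by
  rw [← Subgroup.zpowers_eq_closure]
  have := KleinGroup.zpowers_b_sq_normal
  apply le_antisymm
  · refine Subgroup.commutator_le_of_closure_eq_top (PresentedGroup.closure_range_of _) ?_
    rintro _ ⟨i, rfl⟩ _ ⟨j, rfl⟩
    exact KleinGroup.commutatorElement_of_of_mem_zpowers i j
  · rw [Subgroup.zpowers_le, ← KleinGroup.commutatorElement_b_a]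
    exact Subgroup.commutator_mem_commutator (Subgroup.mem_top _) (Subgroup.mem_top _)
end
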